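/- Let α > 0 and ω > 0, and define u(x,t) = 2α√ω (√(α²+ω) + √ω) e^{x√ω + iωt} / ( α²(e^{2x√ω} − 1) + 2√ω (√(α²+ω) + √ω) e^{2x√ω} ). Then for all x ≥ 0 and all t ∈ ℝ, u satisfies the defocusing NLS equation: i ∂_t u(x,t) + ∂_x² u(x,t) − 2|u(x,t)|² u(x,t) = 0. -/

import Mathlib

open MeasureTheory Set

noncomputable section

/-- The explicit function
`u(x,t) = 2α√ω(√(α²+ω)+√ω) e^{x√ω + iωt} / (α²(e^{2x√ω}-1) + 2√ω(√(α²+ω)+√ω)e^{2x√ω})`. -/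
def uExact (α ω : ℝ) : ℝ → ℝ → ℂ := fun x t =>
  ((2 * α * Real.sqrt ω * (Real.sqrt (α ^ 2 + ω) + Real.sqrt ω) : ℝ) : ℂ) *
      Complex.exp ((x * Real.sqrt ω : ℝ) + Complex.I * ω * t) /
    (((α ^ 2 : ℝ) : ℂ) * (Complex.exp ((2 * x * Real.sqrt ω : ℝ) : ℂ) - 1) +
      ((2 * Real.sqrt ω * (Real.sqrt (α ^ 2 + ω) + Real.sqrt ω) : ℝ) : ℂ) *
        Complex.exp ((2 * x * Real.sqrt ω : ℝ) : ℂ))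

end

/-!
The function is a standing wave `u(x,t) = φ(x) e^{iωt}` with a real profile
`φ = A / g`, `g(x) = p e^{√ω x} - q e^{-√ω x}`, `p = α² + c`, `q = α²`, `A = α c`,
`c = 2√ω(√(α²+ω)+√ω)`; up to a shift, `φ(x) = √ω / sinh(√ω x + δ)`.
For a standing wave the NLS equation reduces to the ODE `φ'' = ωφ + 2φ³`.
Since `g'' = ωg`, the function `A / g` solves this ODE as soon as the first integral
`g'² - ωg² = 4ωpq` equals `A²`, which is the identity `c² = 4ω(α² + c)`.
-/

open Complex Filter Topology

theorem standingWave_satisfies_NLS {φ φ' : ℝ → ℝ} {ω x : ℝ}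
    (hφ : ∀ᶠ y in 𝓝 x, HasDerivAt φ (φ' y) y)
    (hφ' : HasDerivAt φ' (ω * φ x + 2 * φ x ^ 3) x) (t : ℝ) :
    I * deriv (fun s : ℝ => (φ x : ℂ) * exp (I * ω * s)) t
      + deriv (fun y => deriv (fun z => (φ z : ℂ) * exp (I * ω * t)) y) x
      - 2 * (‖(φ x : ℂ) * exp (I * ω * t)‖ : ℂ) ^ 2 * ((φ x : ℂ) * exp (I * ω * t)) = 0 := by
  have hE : ‖exp (I * ω * t)‖ = 1 := by
    rw [show I * ω * t = ((ω * t : ℝ) : ℂ) * I by push_cast; ring]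
    exact norm_exp_ofReal_mul_I _
  set E := exp (I * ω * t)
  have h_dt : deriv (fun s : ℝ => (φ x : ℂ) * exp (I * ω * s)) t = φ x * (E * (I * ω)) := by
    refine (HasDerivAt.const_mul _ (HasDerivAt.cexp ?_)).deriv
    simpa using ((hasDerivAt_id t).ofReal_comp).const_mul (I * ω)
  have h_dx : (fun y => deriv (fun z => (φ z : ℂ) * E) y) =ᶠ[𝓝 x] fun y => (φ' y : ℂ) * E := by
    filter_upwards [hφ] with y hy
    exact (hy.ofReal_comp.mul_const E).deriv
  have h_dxx : deriv (fun y => deriv (fun z => (φ z : ℂ) * E) y) x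
      = ((ω * φ x + 2 * φ x ^ 3 : ℝ) : ℂ) * E := by
    rw [h_dx.deriv_eq]
    exact (hφ'.ofReal_comp.mul_const E).deriv
  have h_norm : (‖(φ x : ℂ) * E‖ : ℂ) ^ 2 = (φ x : ℂ) ^ 2 := by
    rw [norm_mul, hE, mul_one, norm_real, Real.norm_eq_abs, ← ofReal_pow, sq_abs, ofReal_pow]
  rw [h_dt, h_dxx, h_norm]
  push_cast
  linear_combination (φ x * E * ω) * I_sq

theorem hasDerivAt_div_of_firstIntegral {g g' : ℝ → ℝ} {ω A x : ℝ}
    (hg : ∀ᶠ y in 𝓝 x, HasDerivAt g (g' y) y) (hg' : HasDerivAt g' (ω * g x) x)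
    (hfirst : g' x ^ 2 - ω * g x ^ 2 = A ^ 2) (hx : g x ≠ 0) :
    (∀ᶠ y in 𝓝 x, HasDerivAt (fun y => A / g y) (-A * g' y / g y ^ 2) y) ∧
      HasDerivAt (fun y => -A * g' y / g y ^ 2) (ω * (A / g x) + 2 * (A / g x) ^ 3) x := by
  have h_ne : ∀ᶠ y in 𝓝 x, g y ≠ 0 := hg.self_of_nhds.continuousAt.eventually_ne hx
  refine ⟨?_, ?_⟩
  · filter_upwards [hg, h_ne] with y hy hy_ne
    exact ((hasDerivAt_const y A).div hy hy_ne).congr_deriv (by ring)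
  · refine ((hg'.const_mul (-A)).div (hg.self_of_nhds.fun_pow 2) (pow_ne_zero 2 hx)).congr_deriv ?_
    field_simp
    linear_combination (2 * A * g x) * hfirst

section ExpCombination

variable (p q r : ℝ)

noncomputable def expCombination (y : ℝ) : ℝ := p * Real.exp (r * y) - q * Real.exp (-(r * y))

noncomputable def expCombinationDeriv (y : ℝ) : ℝ :=
  r * (p * Real.exp (r * y) + q * Real.exp (-(r * y)))

theorem hasDerivAt_exp_mul (y : ℝ) :
    HasDerivAt (fun y => Real.exp (r * y)) (Real.exp (r * y) * r) y := by
  simpa using ((hasDerivAt_id y).const_mul r).exp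

theorem hasDerivAt_exp_neg_mul (y : ℝ) :
    HasDerivAt (fun y => Real.exp (-(r * y))) (Real.exp (-(r * y)) * -r) y := by
  simpa using ((hasDerivAt_id y).const_mul r).neg.exp

theorem hasDerivAt_expCombination (y : ℝ) :
    HasDerivAt (expCombination p q r) (expCombinationDeriv p q r y) y :=
  (((hasDerivAt_exp_mul r y).const_mul p).sub
    ((hasDerivAt_exp_neg_mul r y).const_mul q)).congr_deriv
    (by simp only [expCombinationDeriv]; ring)

theorem hasDerivAt_expCombinationDeriv (y : ℝ) :
    HasDerivAt (expCombinationDeriv p q r) (r ^ 2 * expCombination p q r y) y :=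
  ((((hasDerivAt_exp_mul r y).const_mul p).add
    ((hasDerivAt_exp_neg_mul r y).const_mul q)).const_mul r).congr_deriv
    (by simp only [expCombination]; ring)

theorem expCombinationDeriv_sq_sub (y : ℝ) :
    expCombinationDeriv p q r y ^ 2 - r ^ 2 * expCombination p q r y ^ 2 = 4 * r ^ 2 * p * q := by
  have h : Real.exp (r * y) * Real.exp (-(r * y)) = 1 := by rw [← Real.exp_add]; simp
  simp only [expCombination, expCombinationDeriv]
  linear_combination (4 * r ^ 2 * p * q) * h

theorem expCombination_pos {p q r y : ℝ} (hq : 0 ≤ q) (hpq : q < p) (hr : 0 ≤ r) (hy : 0 ≤ y) :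
    0 < expCombination p q r y := by
  have h1 : 1 ≤ Real.exp (r * y) := Real.one_le_exp (mul_nonneg hr hy)
  have h2 : Real.exp (-(r * y)) ≤ 1 := Real.exp_le_one_iff.mpr (by nlinarith)
  simp only [expCombination]
  nlinarith

end ExpCombination

theorem uExact_eq_standingWave {α ω c : ℝ} (hc : c = 2 * √ω * (√(α ^ 2 + ω) + √ω)) (x t : ℝ) :
    uExact α ω x t =
      ((α * c / expCombination (α ^ 2 + c) (α ^ 2) √ω x : ℝ) : ℂ) * exp (I * ω * t) := by
  have hE2 : Real.exp (2 * x * √ω) = Real.exp (x * √ω) ^ 2 := by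
    rw [sq, ← Real.exp_add]; ring_nf
  have h_den : expCombination (α ^ 2 + c) (α ^ 2) √ω x
      = (α ^ 2 * (Real.exp (2 * x * √ω) - 1) + c * Real.exp (2 * x * √ω)) / Real.exp (x * √ω) := by
    rw [expCombination, mul_comm √ω x, Real.exp_neg, hE2]
    field_simp
    ring
  have h_real : uExact α ω x t = ((α * c * Real.exp (x * √ω)
      / (α ^ 2 * (Real.exp (2 * x * √ω) - 1) + c * Real.exp (2 * x * √ω)) : ℝ) : ℂ)
      * exp (I * ω * t) := by
    rw [uExact, exp_add, ← ofReal_exp, ← ofReal_exp, hc]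
    push_cast
    ring
  rw [h_real, h_den, div_div_eq_mul_div]

theorem uExact_satisfies_NLS_general (α ω : ℝ) (hω : 0 < ω) :
    ∀ x ≥ (0:ℝ), ∀ t : ℝ,
      Complex.I * deriv (fun s => uExact α ω x s) t
        + deriv (fun y => deriv (fun z => uExact α ω z t) y) x
        - 2 * (‖uExact α ω x t‖ : ℂ) ^ 2 * uExact α ω x t = 0 := by
  intro x hx t
  obtain ⟨c, hc⟩ : ∃ c, c = 2 * √ω * (√(α ^ 2 + ω) + √ω) := ⟨_, rfl⟩
  have hc_pos : 0 < c := by rw [hc]; positivity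
  have hc_sq : c ^ 2 = 4 * √ω ^ 2 * (α ^ 2 + c) := by
    have hb := Real.sq_sqrt (by positivity : 0 ≤ α ^ 2 + ω)
    have hr := Real.sq_sqrt hω.le
    rw [hc]; linear_combination 4 * √ω ^ 2 * hb - 4 * √ω ^ 2 * hr
  have hfirst : expCombinationDeriv (α ^ 2 + c) (α ^ 2) √ω x ^ 2
      - √ω ^ 2 * expCombination (α ^ 2 + c) (α ^ 2) √ω x ^ 2 = (α * c) ^ 2 := by
    rw [expCombinationDeriv_sq_sub]; linear_combination -α ^ 2 * hc_sq
  have hg_pos : 0 < expCombination (α ^ 2 + c) (α ^ 2) √ω x :=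
    expCombination_pos (by positivity) (by linarith) (Real.sqrt_nonneg ω) hx
  obtain ⟨hφ, hφ'⟩ := hasDerivAt_div_of_firstIntegral
    (Eventually.of_forall (hasDerivAt_expCombination _ _ _))
    (hasDerivAt_expCombinationDeriv _ _ _ x) hfirst hg_pos.ne'
  rw [Real.sq_sqrt hω.le] at hφ'
  simp only [uExact_eq_standingWave hc]
  exact standingWave_satisfies_NLS hφ hφ' t

/-- For `α > 0`, `ω > 0`, the explicit function `uExact α ω` satisfies the defocusing NLS
equation `i u_t + u_xx - 2|u|²u = 0` for all `x ≥ 0` and all `t ∈ ℝ`. -/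
theorem uExact_satisfies_NLS (α ω : ℝ) (hα : 0 < α) (hω : 0 < ω) :
    ∀ x ≥ (0:ℝ), ∀ t : ℝ,
      Complex.I * deriv (fun s => uExact α ω x s) t
        + deriv (fun y => deriv (fun z => uExact α ω z t) y) x
        - 2 * (‖uExact α ω x t‖ : ℂ) ^ 2 * uExact α ω x t = 0 :=
  uExact_satisfies_NLS_general α ω hω
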